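/- For every integer n ≥ 1, the recurrence coefficients and auxiliary quantities satisfy r_n(t) + Σ_{j=0}^{n−1} α_j(t) = 2β_n(t)·(α_n(t) + α_{n−1}(t)). -/

import Mathlib

open MeasureTheory Real Filter

/-- The singularly perturbed Laguerre-type weight `w(x;t) = x^λ e^{-x² - t/x}` on `(0,∞)`. -/
noncomputable def weight (lam t x : ℝ) : ℝ := x ^ lam * Real.exp (-x ^ 2 - t / x)

/-- The system of monic orthogonal polynomials with respect to the weight
`w(x;t) = x^λ e^{-x² - t/x}` on `(0,∞)` (for every `t > 0`), together with the
normalization constants `h n t` and the recurrence coefficients `α n t`, `β n t`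
of the three-term recurrence `x Pₙ = Pₙ₊₁ + αₙ Pₙ + βₙ Pₙ₋₁`, `P₀ = 1`, `β₀ P₋₁ = 0`. -/
structure SingLaguerreOPS (lam : ℝ) : Type where
  P : ℕ → ℝ → Polynomial ℝ
  h : ℕ → ℝ → ℝ
  α : ℕ → ℝ → ℝ
  β : ℕ → ℝ → ℝ
  /-- all moments `∫₀^∞ x^k w(x;t) dx`, `k ∈ ℤ`, converge -/
  moments : ∀ (k : ℤ) (t : ℝ), 0 < t →
    IntegrableOn (fun x : ℝ => x ^ k * weight lam t x) (Set.Ioi (0:ℝ))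
  monic : ∀ n t, 0 < t → (P n t).Monic
  natDegree_eq : ∀ n t, 0 < t → (P n t).natDegree = n
  h_pos : ∀ n t, 0 < t → 0 < h n t
  orth : ∀ m n t, 0 < t →
    ∫ x in Set.Ioi (0:ℝ), (P m t).eval x * (P n t).eval x * weight lam t x
      = if m = n then h n t else 0
  P_zero : ∀ t, 0 < t → P 0 t = 1
  recur : ∀ n t, 0 < t →
    Polynomial.X * P n t
      = P (n+1) t + Polynomial.C (α n t) * P n t
        + Polynomial.C (β n t) * (if n = 0 then 0 else P (n-1) t)

/-- The auxiliary quantity `Rₙ(t) = (t/hₙ) ∫₀^∞ y⁻¹ Pₙ(y)² w(y;t) dy`. -/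
noncomputable def Rn (lam : ℝ) (S : SingLaguerreOPS lam) (n : ℕ) (t : ℝ) : ℝ :=
  t / S.h n t * ∫ y in Set.Ioi (0:ℝ), ((S.P n t).eval y) ^ 2 * weight lam t y / y

/-- The auxiliary quantity `rₙ(t) = (t/hₙ₋₁) ∫₀^∞ y⁻¹ Pₙ(y) Pₙ₋₁(y) w(y;t) dy`
(with the convention `P₋₁ = 0`, so `r₀ = 0`). -/
noncomputable def rn (lam : ℝ) (S : SingLaguerreOPS lam) (n : ℕ) (t : ℝ) : ℝ :=
  t / S.h (n-1) t *
    ∫ y in Set.Ioi (0:ℝ),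
      (S.P n t).eval y * (if n = 0 then 0 else (S.P (n-1) t).eval y) * weight lam t y / y

/-- The derivative `v'(z) = 2z - λ/z - t/z²` of the potential `v(z) = z² + t/z - λ ln z`. -/
noncomputable def vprime (lam t z : ℝ) : ℝ := 2 * z - lam / z - t / z ^ 2

/-!
Integrate `(x Pₙ Pₙ₋₁ w)'` over `(0, ∞)`. Since `w' = -v' w`, this says
`∫ (x Pₙ Pₙ₋₁)' w = ∫ x Pₙ Pₙ₋₁ v' w`. By orthogonality the left side is `hₙ₋₁ ∑_{j<n} αⱼ`, because
the coefficient of `xⁿ⁻¹` in `Pₙ` is `-∑_{j<n} αⱼ`. On the right the `λ` term vanishes, the `2x²`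
term gives `2(αₙ + αₙ₋₁) hₙ = 2βₙ(αₙ + αₙ₋₁) hₙ₋₁`, and the `-t/x²` term gives `-rₙ hₙ₋₁`.
-/

open Polynomial Set

theorem map_eq_coeff_smul_of_map_lt_eq_zero {R M : Type*} [CommRing R] [AddCommGroup M]
    [Module R M] {P : ℕ → R[X]} (hmonic : ∀ n, (P n).Monic) (hdeg : ∀ n, (P n).natDegree = n)
    (L : R[X] →ₗ[R] M) {m : ℕ} (hL : ∀ a < m, L (P a) = 0) {q : R[X]} (hq : q.degree ≤ m) :
    L q = q.coeff m • L (P m) := by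
  have hlead : ∀ n, (P n).coeff n = 1 := fun n => by
    simpa [hdeg n] using (hmonic n).coeff_natDegree
  suffices ∀ d ≤ m + 1, ∀ q : R[X], q.degree < d → L q = q.coeff m • L (P m) from
    this (m + 1) le_rfl q (hq.trans_lt (by exact_mod_cast m.lt_succ_self))
  intro d
  induction d with
  | zero =>
    intro _ q hq
    simp [Polynomial.degree_eq_bot.mp (by simpa using hq)]
  | succ d ih =>
    intro hd q hq
    set c := q.coeff d
    have hr : (q - C c * P d).degree < d := by
      refine (degree_lt_iff_coeff_zero _ _).mpr fun k hk => ?_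
      rcases hk.eq_or_lt with rfl | hk
      · simp [c, hlead]
      · have hPk : (P d).coeff k = 0 := coeff_eq_zero_of_natDegree_lt (by rw [hdeg]; exact hk)
        simp [hPk, (degree_lt_iff_coeff_zero _ _).mp hq k (by exact_mod_cast hk)]
    have hq' : q = (q - C c * P d) + C c * P d := by ring
    rw [hq', map_add, ih (by omega) _ hr, ← smul_eq_C_mul, map_smul]
    rcases (Nat.lt_succ_iff.mp hd).lt_or_eq with hdm | rfl
    · simp [hL d hdm, coeff_eq_zero_of_natDegree_lt (by rw [hdeg]; exact hdm : (P d).natDegree < m)]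
    · simp [hlead, sub_smul]

theorem integral_Ioi_zero_eq_zero_of_hasDerivAt {E : Type*} [NormedAddCommGroup E]
    [NormedSpace ℝ E] {G g : ℝ → E} (hderiv : ∀ x ∈ Ioi 0, HasDerivAt G (g x) x)
    (hg : IntegrableOn g (Ioi 0)) (hG : IntegrableOn (fun x => x⁻¹ • G x) (Ioi 0)) :
    ∫ x in Ioi 0, g x = 0 := by
  -- substituting `x = exp u` turns `(0, ∞)` into the whole line, where both ends are at infinity
  have hexp : ∀ u ∈ (univ : Set ℝ), HasDerivWithinAt exp (exp u) univ u :=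
    fun u _ => (hasDerivAt_exp u).hasDerivWithinAt
  have himage : exp '' univ = Ioi 0 := by rw [image_univ, range_exp]
  have hinj : InjOn exp univ := exp_injective.injOn
  rw [← himage, integral_image_eq_integral_abs_deriv_smul MeasurableSet.univ hexp hinj,
    setIntegral_univ]
  refine integral_eq_zero_of_hasDerivAt_of_integrable
    (f := fun u => G (exp u)) (fun u => ?_) ?_ ?_
  · simpa [abs_of_pos (exp_pos u), Function.comp_def] using
      (hderiv _ (exp_pos u)).scomp u (hasDerivAt_exp u)
  · rw [← integrableOn_univ, ← integrableOn_image_iff_integrableOn_abs_deriv_smul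
      MeasurableSet.univ hexp hinj, himage]
    exact hg
  · have := (integrableOn_image_iff_integrableOn_abs_deriv_smul
      MeasurableSet.univ hexp hinj (fun x => x⁻¹ • G x)).mp (himage ▸ hG)
    rw [integrableOn_univ] at this
    refine this.congr (Eventually.of_forall fun u => ?_)
    simp [abs_of_pos (exp_pos u), smul_smul, (exp_pos u).ne']

theorem hasDerivAt_weight (lam t : ℝ) {x : ℝ} (hx : 0 < x) :
    HasDerivAt (weight lam t) (-vprime lam t x * weight lam t x) x := by
  have hpow : HasDerivAt (fun y => y ^ lam) (lam * x ^ (lam - 1)) x :=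
    hasDerivAt_rpow_const (Or.inl hx.ne')
  have hexp := ((hasDerivAt_pow 2 x).neg.sub ((hasDerivAt_inv hx.ne').const_mul t)).exp
  refine (hpow.fun_mul hexp).congr_deriv ?_
  simp only [weight, vprime, rpow_sub_one hx.ne', Pi.sub_apply, Pi.neg_apply, div_eq_mul_inv]
  field_simp
  ring

section Moments

variable {lam t : ℝ} (hmom : ∀ k : ℤ, IntegrableOn (fun x => x ^ k * weight lam t x) (Ioi 0))
include hmom

theorem integrableOn_eval_mul_zpow_mul_weight (q : ℝ[X]) (k : ℤ) :
    IntegrableOn (fun x => q.eval x * x ^ k * weight lam t x) (Ioi 0) := by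
  induction q using Polynomial.induction_on' with
  | add p r hp hr =>
    refine (hp.add hr).congr_fun (fun x _ => ?_) measurableSet_Ioi
    simp only [Pi.add_apply, eval_add, add_mul]
  | monomial i a =>
    refine IntegrableOn.congr_fun ((hmom (i + k)).const_mul a) (fun x hx => ?_) measurableSet_Ioi
    rw [eval_monomial, zpow_add₀ (ne_of_gt hx), zpow_natCast]
    ring

noncomputable def weightMoment (k : ℤ) : ℝ[X] →ₗ[ℝ] ℝ where
  toFun q := ∫ x in Ioi 0, q.eval x * x ^ k * weight lam t x
  map_add' p q := by
    simp only [eval_add, add_mul]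
    exact integral_add (integrableOn_eval_mul_zpow_mul_weight hmom p k)
      (integrableOn_eval_mul_zpow_mul_weight hmom q k)
  map_smul' c q := by
    simp only [eval_smul, smul_eq_mul, mul_assoc, RingHom.id_apply]
    exact integral_const_mul c _

theorem weightMoment_apply (k : ℤ) (q : ℝ[X]) :
    weightMoment hmom k q = ∫ x in Ioi 0, q.eval x * x ^ k * weight lam t x := rfl

theorem weightMoment_X_mul (k : ℤ) (q : ℝ[X]) :
    weightMoment hmom k (X * q) = weightMoment hmom (k + 1) q := by
  refine setIntegral_congr_fun measurableSet_Ioi fun x hx => ?_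
  rw [eval_mul, eval_X, zpow_add_one₀ (ne_of_gt hx)]
  ring

/-- `∫₀^∞ (q w)' = 0` with `w' = -v' w`, i.e. `∫ q' w = ∫ q v' w`. -/
theorem weightMoment_derivative (q : ℝ[X]) :
    weightMoment hmom 0 (derivative q)
      = 2 * weightMoment hmom 1 q - lam * weightMoment hmom (-1) q
        - t * weightMoment hmom (-2) q := by
  have hI := integrableOn_eval_mul_zpow_mul_weight hmom
  have h₁ := (hI q 1).const_mul 2
  have h₂ := (hI q (-1)).const_mul lam
  have h₃ := (hI q (-2)).const_mul t
  have hsplit : EqOn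
      (fun x => (derivative q).eval x * weight lam t x
        - q.eval x * (vprime lam t x * weight lam t x))
      (fun x => (derivative q).eval x * x ^ (0 : ℤ) * weight lam t x
        - (2 * (q.eval x * x ^ (1 : ℤ) * weight lam t x)
          - lam * (q.eval x * x ^ (-1 : ℤ) * weight lam t x)
          - t * (q.eval x * x ^ (-2 : ℤ) * weight lam t x))) (Ioi 0) := fun x hx => by
    simp only [vprime, zpow_neg, zpow_ofNat]
    field_simp
  have hparts := integral_Ioi_zero_eq_zero_of_hasDerivAt (G := fun x => q.eval x * weight lam t x)
    (fun x hx => ((q.hasDerivAt x).mul (hasDerivAt_weight lam t hx)).congr_deriv (by ring))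
    (((hI (derivative q) 0).sub ((h₁.sub h₂).sub h₃)).congr_fun hsplit.symm measurableSet_Ioi)
    ((hI q (-1)).congr_fun (fun x _ => by simp only [zpow_neg, zpow_one, smul_eq_mul]; ring)
      measurableSet_Ioi)
  rw [setIntegral_congr_fun measurableSet_Ioi hsplit, integral_sub (hI _ 0) ?_,
    integral_sub ?_ h₃, integral_sub h₁ h₂, integral_const_mul, integral_const_mul,
    integral_const_mul] at hparts
  · simp only [weightMoment_apply]
    linarith
  · exact h₁.sub h₂
  · exact (h₁.sub h₂).sub h₃

end Moments

theorem coeff_X_mul_derivative {R : Type*} [CommSemiring R] (p : R[X]) (k : ℕ) :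
    (X * derivative p).coeff k = k * p.coeff k := by
  cases k with
  | zero => simp
  | succ k => rw [coeff_X_mul, coeff_derivative]; push_cast; ring

namespace SingLaguerreOPS

variable {lam t : ℝ} (S : SingLaguerreOPS lam) (ht : 0 < t)
include ht

theorem degree_P (n : ℕ) : (S.P n t).degree = n := by
  rw [degree_eq_natDegree (S.monic n t ht).ne_zero, S.natDegree_eq n t ht]

theorem coeff_P_self (n : ℕ) : (S.P n t).coeff n = 1 := by
  simpa [S.natDegree_eq n t ht] using (S.monic n t ht).coeff_natDegree

theorem degree_prev_lt (n : ℕ) : (if n = 0 then 0 else S.P (n - 1) t).degree < n := by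
  split_ifs with hn
  · simp
  · rw [S.degree_P ht]; exact_mod_cast Nat.sub_one_lt hn

noncomputable def pairing (m : ℕ) : ℝ[X] →ₗ[ℝ] ℝ :=
  (weightMoment (S.moments · t ht) 0).comp (LinearMap.mulRight ℝ (S.P m t))

theorem pairing_apply (m : ℕ) (q : ℝ[X]) :
    S.pairing ht m q = ∫ x in Ioi 0, q.eval x * (S.P m t).eval x * weight lam t x := by
  simp [pairing, weightMoment_apply, mul_assoc]

theorem pairing_P (a m : ℕ) : S.pairing ht m (S.P a t) = if a = m then S.h m t else 0 := by
  rw [pairing_apply, S.orth a m t ht]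

theorem pairing_eq_coeff_mul {m : ℕ} {q : ℝ[X]} (hq : q.degree ≤ m) :
    S.pairing ht m q = q.coeff m * S.h m t := by
  rw [map_eq_coeff_smul_of_map_lt_eq_zero (fun n => S.monic n t ht) (fun n => S.natDegree_eq n t ht)
    (S.pairing ht m) (fun a ha => by rw [pairing_P, if_neg ha.ne]) hq, pairing_P, if_pos rfl,
    smul_eq_mul]

theorem pairing_eq_zero {m : ℕ} {q : ℝ[X]} (hq : q.degree < m) : S.pairing ht m q = 0 := by
  rw [S.pairing_eq_coeff_mul ht hq.le, coeff_eq_zero_of_degree_lt hq, zero_mul]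

theorem pairing_X_mul_comm (k m : ℕ) :
    S.pairing ht m (X * S.P k t) = S.pairing ht k (X * S.P m t) := by
  simp only [pairing_apply, eval_mul, eval_X]
  congr 1 with x
  ring

theorem pairing_X_mul_P (k m : ℕ) :
    S.pairing ht m (X * S.P k t)
      = S.pairing ht m (S.P (k + 1) t) + S.α k t * S.pairing ht m (S.P k t)
      + S.β k t * S.pairing ht m (if k = 0 then 0 else S.P (k - 1) t) := by
  rw [S.recur k t ht, map_add, map_add, ← smul_eq_C_mul, ← smul_eq_C_mul, map_smul, map_smul,
    smul_eq_mul, smul_eq_mul]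

theorem pairing_succ_X_mul_P (m : ℕ) : S.pairing ht (m + 1) (X * S.P m t) = S.h (m + 1) t := by
  rw [pairing_X_mul_P, pairing_P, pairing_P, S.pairing_eq_zero ht ((S.degree_prev_lt ht m).trans
    (by exact_mod_cast m.lt_succ_self))]
  simp

theorem pairing_X_mul_P_self (m : ℕ) : S.pairing ht m (X * S.P m t) = S.α m t * S.h m t := by
  rw [pairing_X_mul_P, pairing_P, pairing_P, S.pairing_eq_zero ht (S.degree_prev_lt ht m)]
  simp

theorem pairing_X_mul_P_succ (m : ℕ) :
    S.pairing ht m (X * S.P (m + 1) t) = S.β (m + 1) t * S.h m t := by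
  rw [pairing_X_mul_P, if_neg m.succ_ne_zero, Nat.add_sub_cancel, pairing_P, pairing_P, pairing_P,
    if_neg (by omega), if_neg (by omega), if_pos rfl]
  ring

theorem h_succ (m : ℕ) : S.h (m + 1) t = S.β (m + 1) t * S.h m t := by
  rw [← S.pairing_succ_X_mul_P ht, pairing_X_mul_comm, pairing_X_mul_P_succ]

theorem pairing_succ_X_sq_mul_P (m : ℕ) :
    S.pairing ht (m + 1) (X ^ 2 * S.P m t) = (S.α (m + 1) t + S.α m t) * S.h (m + 1) t := by
  have hprev : (X * (if m = 0 then 0 else S.P (m - 1) t)).degree < ↑(m + 1) := by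
    rw [X_mul, degree_mul_X]
    exact_mod_cast WithBot.add_lt_add_right (by simp) (S.degree_prev_lt ht m)
  rw [pow_two, mul_assoc, S.recur m t ht, mul_add, mul_add, mul_left_comm _ (C _),
    mul_left_comm _ (C _), map_add, map_add, ← smul_eq_C_mul, ← smul_eq_C_mul, map_smul,
    map_smul, S.pairing_eq_zero ht hprev, pairing_X_mul_P_self, pairing_succ_X_mul_P]
  simp only [smul_eq_mul]
  ring

theorem coeff_P_succ_self (n : ℕ) :
    (S.P (n + 1) t).coeff n = (X * S.P n t).coeff n - S.α n t := by
  rw [S.recur n t ht, coeff_add, coeff_add, coeff_C_mul, coeff_C_mul, S.coeff_P_self ht,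
    coeff_eq_zero_of_degree_lt (S.degree_prev_lt ht n)]
  ring

theorem coeff_P_succ_eq_neg_sum (m : ℕ) :
    (S.P (m + 1) t).coeff m = -∑ j ∈ Finset.range (m + 1), S.α j t := by
  induction m with
  | zero => simp [coeff_P_succ_self _ ht]
  | succ m ih => rw [coeff_P_succ_self _ ht, coeff_X_mul, ih, Finset.sum_range_succ _ (m + 1)]; ring

theorem pairing_X_mul_derivative_P_succ (m : ℕ) :
    S.pairing ht m (X * derivative (S.P (m + 1) t)) = -(S.P (m + 1) t).coeff m * S.h m t := by
  set r := X * derivative (S.P (m + 1) t) - C ((m : ℝ) + 1) * S.P (m + 1) t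
  have hr : r.degree ≤ m := by
    refine (degree_le_iff_coeff_zero _ _).mpr fun k hk => ?_
    simp only [r, coeff_sub, coeff_C_mul, coeff_X_mul_derivative]
    rcases (show m + 1 ≤ k by exact_mod_cast hk).eq_or_lt with rfl | hk
    · push_cast; ring
    · rw [coeff_eq_zero_of_degree_lt ((S.degree_P ht _).trans_lt (by exact_mod_cast hk))]
      ring
  have hrm : r.coeff m = -(S.P (m + 1) t).coeff m := by
    simp only [r, coeff_sub, coeff_C_mul, coeff_X_mul_derivative]
    ring
  rw [show X * derivative (S.P (m + 1) t) = r + C ((m : ℝ) + 1) * S.P (m + 1) t by ring,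
    map_add, S.pairing_eq_coeff_mul ht hr, hrm, ← smul_eq_C_mul, map_smul, pairing_P,
    if_neg (by omega), smul_zero, add_zero]

theorem pairing_succ_X_mul_derivative_P (m : ℕ) :
    S.pairing ht (m + 1) (X * derivative (S.P m t)) = 0 := by
  refine S.pairing_eq_zero ht ((degree_lt_iff_coeff_zero _ _).mpr fun k hk => ?_)
  rw [coeff_X_mul_derivative, coeff_eq_zero_of_degree_lt ((S.degree_P ht m).trans_lt
    (by exact_mod_cast hk)), mul_zero]

theorem pairing_eq_weightMoment (m : ℕ) (q : ℝ[X]) :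
    S.pairing ht m q = weightMoment (S.moments · t ht) 0 (q * S.P m t) := rfl

theorem rn_succ (m : ℕ) :
    rn lam S (m + 1) t
      = t / S.h m t * weightMoment (S.moments · t ht) (-1) (S.P (m + 1) t * S.P m t) := by
  simp only [rn, weightMoment_apply, Nat.add_sub_cancel, if_neg m.succ_ne_zero, eval_mul, zpow_neg,
    zpow_one, div_eq_mul_inv]
  congr 2 with x
  ring

theorem mul_weightMoment_neg_one_P_succ_mul_P (m : ℕ) :
    t * weightMoment (S.moments · t ht) (-1) (S.P (m + 1) t * S.P m t)
      = (2 * S.β (m + 1) t * (S.α (m + 1) t + S.α m t) - ∑ j ∈ Finset.range (m + 1), S.α j t)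
        * S.h m t := by
  have hparts := weightMoment_derivative (S.moments · t ht) (X * (S.P (m + 1) t * S.P m t))
  have hderiv : weightMoment (S.moments · t ht) 0 (derivative (X * (S.P (m + 1) t * S.P m t)))
      = -(S.P (m + 1) t).coeff m * S.h m t := by
    rw [show derivative (X * (S.P (m + 1) t * S.P m t)) = S.P (m + 1) t * S.P m t
        + X * derivative (S.P (m + 1) t) * S.P m t + X * derivative (S.P m t) * S.P (m + 1) t by
      simp only [derivative_mul, derivative_X]; ring, map_add, map_add,
      ← S.pairing_eq_weightMoment ht, ← S.pairing_eq_weightMoment ht,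
      ← S.pairing_eq_weightMoment ht, pairing_P, if_neg (by omega),
      pairing_X_mul_derivative_P_succ, pairing_succ_X_mul_derivative_P]
    ring
  have hone : weightMoment (S.moments · t ht) 1 (X * (S.P (m + 1) t * S.P m t))
      = (S.α (m + 1) t + S.α m t) * S.h (m + 1) t := by
    rw [← S.pairing_succ_X_sq_mul_P ht, pairing_eq_weightMoment, ← zero_add (1 : ℤ),
      ← weightMoment_X_mul]
    congr 1
    ring
  have hneg_one : weightMoment (S.moments · t ht) (-1) (X * (S.P (m + 1) t * S.P m t)) = 0 := by
    rw [weightMoment_X_mul, neg_add_cancel, ← S.pairing_eq_weightMoment ht, pairing_P,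
      if_neg (by omega)]
  have hneg_two : weightMoment (S.moments · t ht) (-2) (X * (S.P (m + 1) t * S.P m t))
      = weightMoment (S.moments · t ht) (-1) (S.P (m + 1) t * S.P m t) := by
    rw [weightMoment_X_mul]
    norm_num
  rw [hderiv, hone, hneg_one, hneg_two, coeff_P_succ_eq_neg_sum _ ht, h_succ _ ht] at hparts
  linear_combination hparts

end SingLaguerreOPS

theorem statement10_general (lam t : ℝ) (ht : 0 < t)
    (S : SingLaguerreOPS lam) (n : ℕ) (hn : 1 ≤ n) :
    rn lam S n t + ∑ j ∈ Finset.range n, S.α j t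
      = 2 * S.β n t * (S.α n t + S.α (n-1) t) := by
  obtain ⟨m, rfl⟩ : ∃ m, n = m + 1 := ⟨n - 1, by omega⟩
  have hh := (S.h_pos m t ht).ne'
  rw [S.rn_succ ht, Nat.add_sub_cancel]
  field_simp
  linear_combination S.mul_weightMoment_neg_one_P_succ_mul_P ht m

theorem statement10 (lam t : ℝ) (hlam : 0 ≤ lam) (ht : 0 < t)
    (S : SingLaguerreOPS lam) (n : ℕ) (hn : 1 ≤ n) :
    rn lam S n t + ∑ j ∈ Finset.range n, S.α j t
      = 2 * S.β n t * (S.α n t + S.α (n-1) t) :=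
  statement10_general lam t ht S n hn
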